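/- Let K be a finite simplicial complex with an injective filtration function f, and let Σ_ε denote, for a fixed n-dimensional homology class [α] born at a and terminating at b (with 0 < ε < (b−a)/2), the set of (n+1)-simplices that terminate [α] in some filtration induced by an injective filtration function within sup-distance ε of f. Then ε ↦ |Σ_ε| is monotonically increasing on (0, (b−a)/2], and any terminal simplex Δ ∈ Σ_ε satisfies f(Δ) ∈ [b − 2ε, b + 2ε]. -/

import Mathlib

open scoped BigOperators

/-- A finite simplicial complex on vertex type `V`: a finite family of nonempty
finite vertex sets closed under passing to nonempty subsets. -/
structure SComplex (V : Type*) where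
  faces : Finset (Finset V)
  nonempty_of_mem : ∀ s ∈ faces, s.Nonempty
  down_closed : ∀ s ∈ faces, ∀ t ⊆ s, t.Nonempty → t ∈ faces

variable {V : Type*} [LinearOrder V]

/-- `f` is an injective filtration function on `K`: face-monotone and injective on faces. -/
def IsFiltrationFun (K : SComplex V) (f : Finset V → ℝ) : Prop :=
  (∀ s ∈ K.faces, ∀ t ∈ K.faces, s ⊆ t → f s ≤ f t) ∧
  (∀ s ∈ K.faces, ∀ t ∈ K.faces, f s = f t → s = t)

/-- The sup-distance between `f` and `g` over the faces of `K` is at most `ε`. -/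
def DistLE (K : SComplex V) (f g : Finset V → ℝ) (ε : ℝ) : Prop :=
  ∀ s ∈ K.faces, |f s - g s| ≤ ε

/-- The sublevel subcomplex `K^f_r = f⁻¹((-∞, r])`. -/
noncomputable def sublevel (K : SComplex V) (f : Finset V → ℝ) (r : ℝ) : Finset (Finset V) :=
  K.faces.filter (fun s => f s ≤ r)

variable (𝔽 : Type*) [Field 𝔽]

/-- The simplicial boundary operator on chains (finitely supported functions on
simplices), with signs determined by the linear order on vertices. -/
noncomputable def bdry : (Finset V →₀ 𝔽) →ₗ[𝔽] (Finset V →₀ 𝔽) :=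
  Finsupp.lsum 𝔽 (fun s => ∑ x ∈ s,
    ((-1 : 𝔽) ^ (s.filter (fun y => y < x)).card) • Finsupp.lsingle (s.erase x))

/-- The submodule of `n`-chains supported on simplices of `L` (of cardinality `n+1`). -/
def chainsIn (L : Finset (Finset V)) (n : ℕ) : Submodule 𝔽 (Finset V →₀ 𝔽) where
  carrier := {c | ∀ s ∈ c.support, s ∈ L ∧ s.card = n + 1}
  add_mem' := by
    intro c d hc hd s hs
    rcases Finset.mem_union.mp (Finsupp.support_add hs) with h | h
    · exact hc s h
    · exact hd s h
  zero_mem' := by intro s hs; simp at hs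
  smul_mem' := by
    intro a c hc s hs
    exact hc s (Finsupp.support_smul hs)

/-- `n`-cycles supported in `L`. -/
noncomputable def cyclesIn (L : Finset (Finset V)) (n : ℕ) : Submodule 𝔽 (Finset V →₀ 𝔽) :=
  chainsIn 𝔽 L n ⊓ LinearMap.ker (bdry 𝔽)

/-- `n`-boundaries of `(n+1)`-chains supported in `L`. -/
noncomputable def boundariesIn (L : Finset (Finset V)) (n : ℕ) : Submodule 𝔽 (Finset V →₀ 𝔽) :=
  (chainsIn 𝔽 L (n + 1)).map (bdry 𝔽)

/-- `α` is an `n`-cycle in the subcomplex `L`. -/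
def IsCycleIn (L : Finset (Finset V)) (n : ℕ) (α : Finset V →₀ 𝔽) : Prop :=
  α ∈ cyclesIn 𝔽 L n

/-- The class of `α` is trivial in `H_n(L)`. -/
def TrivialIn (L : Finset (Finset V)) (n : ℕ) (α : Finset V →₀ 𝔽) : Prop :=
  α ∈ boundariesIn 𝔽 L n

/-- `α` and `β` are homologous in `L`. -/
def HomologousIn (L : Finset (Finset V)) (n : ℕ) (α β : Finset V →₀ 𝔽) : Prop :=
  α - β ∈ boundariesIn 𝔽 L n

/-- The homology class `[α] ∈ H_n(K^f_a)` is born at `a`: it is a nontrivial cycle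
at level `a` and does not come from any strictly earlier level. -/
def BornAt (K : SComplex V) (f : Finset V → ℝ) (n : ℕ) (α : Finset V →₀ 𝔽) (a : ℝ) : Prop :=
  IsCycleIn 𝔽 (sublevel K f a) n α ∧ ¬ TrivialIn 𝔽 (sublevel K f a) n α ∧
  ∀ q < a, ¬ ∃ β, IsCycleIn 𝔽 (sublevel K f q) n β ∧ HomologousIn 𝔽 (sublevel K f a) n α β

/-- The class `[α]` terminates at level `b` in the filtration `K^f`. -/
def TerminatesAt (K : SComplex V) (f : Finset V → ℝ) (n : ℕ) (α : Finset V →₀ 𝔽) (b : ℝ) : Prop :=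
  TrivialIn 𝔽 (sublevel K f b) n α ∧ ∀ q < b, ¬ TrivialIn 𝔽 (sublevel K f q) n α

/-- `Δ` is the terminal simplex of `[α]` in the filtration `K^f`: the simplex added
at the level where `[α]` terminates. -/
def TerminalSimplex (K : SComplex V) (f : Finset V → ℝ) (n : ℕ) (α : Finset V →₀ 𝔽)
    (Δ : Finset V) : Prop :=
  Δ ∈ K.faces ∧ TerminatesAt 𝔽 K f n α (f Δ)

/-- `Σ_ε`: the set of terminal simplices of `[α]` over all injective filtration
functions within sup-distance `ε` of `f`. -/
def TermSet (K : SComplex V) (f : Finset V → ℝ) (n : ℕ) (α : Finset V →₀ 𝔽) (ε : ℝ) :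
    Set (Finset V) :=
  {Δ | ∃ g, IsFiltrationFun K g ∧ DistLE K f g ε ∧ TerminalSimplex 𝔽 K g n α Δ}

/-- `τ` gives birth to a class in `H_n(K^f)`. -/
def IsBirthSimplex (K : SComplex V) (f : Finset V → ℝ) (n : ℕ) (τ : Finset V) : Prop :=
  τ ∈ K.faces ∧ ∃ β : Finset V →₀ 𝔽, BornAt 𝔽 K f n β (f τ)

/-- `τ` terminates a class in `H_n(K^f)`. -/
def IsTerminalSimplexOf (K : SComplex V) (f : Finset V → ℝ) (n : ℕ) (τ : Finset V) : Prop :=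
  τ ∈ K.faces ∧ ∃ (β : Finset V →₀ 𝔽) (a : ℝ),
    BornAt 𝔽 K f n β a ∧ TerminatesAt 𝔽 K f n β (f τ)

/-- The linear order on the faces of `K` induced by `g`. -/
def inducedRel (K : SComplex V) (g : Finset V → ℝ) :
    {s // s ∈ K.faces} → {s // s ∈ K.faces} → Prop :=
  fun s t => g s.1 < g t.1

/-- `Π_ε`: the set of orders on the faces of `K` induced by injective filtration
functions within sup-distance `ε` of `f`. -/
def OrderSet (K : SComplex V) (f : Finset V → ℝ) (ε : ℝ) :
    Set ({s // s ∈ K.faces} → {s // s ∈ K.faces} → Prop) :=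
  {r | ∃ g, IsFiltrationFun K g ∧ DistLE K f g ε ∧ r = inducedRel K g}

/-- `f` is generic: equal absolute differences of `f`-values occur only for the
same unordered pair of faces. -/
def Generic (K : SComplex V) (f : Finset V → ℝ) : Prop :=
  ∀ s ∈ K.faces, ∀ t ∈ K.faces, ∀ s' ∈ K.faces, ∀ t' ∈ K.faces,
    s ≠ t → s' ≠ t' → |f s - f t| = |f s' - f t'| →
    (s = s' ∧ t = t') ∨ (s = t' ∧ t = s')

/-- The rank of the map `H_n(K^f_p) → H_n(K^f_q)`, realized as the dimension of
the image of the cycles at level `p` in the quotient by boundaries at level `q`. -/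
noncomputable def persRank (K : SComplex V) (f : Finset V → ℝ) (n : ℕ) (p q : ℝ) : ℕ :=
  Module.finrank 𝔽
    ↥(Submodule.map (boundariesIn 𝔽 (sublevel K f q) n).mkQ (cyclesIn 𝔽 (sublevel K f p) n))

/-- `[a, b)` is a bar of the `n`-th persistence module of `K^f`: the standard
inclusion–exclusion of ranks equals `1` for all sufficiently small offsets. -/
def IsBar (K : SComplex V) (f : Finset V → ℝ) (n : ℕ) (a b : ℝ) : Prop :=
  a < b ∧ ∃ δ > 0, ∀ ε : ℝ, 0 < ε → ε < δ →
    persRank 𝔽 K f n a (b - ε) + persRank 𝔽 K f n (a - ε) b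
      = persRank 𝔽 K f n a b + persRank 𝔽 K f n (a - ε) (b - ε) + 1

/-!
The termination level of a class is 1-Lipschitz in the filtration function: if `‖f - g‖ ≤ ε`
then `K^g_r ⊆ K^f_{r+ε}` and `K^f_r ⊆ K^g_{r+ε}`, so a class dying at `b` in `K^f` dies within
`ε` of `b` in `K^g`. A terminal simplex `Δ` in `K^g` sits at that level, `g Δ`, and
`|f Δ - g Δ| ≤ ε` gives the window `[b - 2ε, b + 2ε]`. Monotonicity is just `Σ_ε₁ ⊆ Σ_ε₂`
inside the finite set of faces.
-/

namespace DistLE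

variable {V : Type*} {K : SComplex V} {f g : Finset V → ℝ} {ε : ℝ}

theorem symm (hd : DistLE K f g ε) : DistLE K g f ε :=
  fun s hs => abs_sub_comm (g s) (f s) ▸ hd s hs

theorem mono {ε' : ℝ} (hd : DistLE K f g ε) (h : ε ≤ ε') : DistLE K f g ε' :=
  fun s hs => (hd s hs).trans h

theorem sublevel_subset (hd : DistLE K f g ε) (r : ℝ) :
    sublevel K g r ⊆ sublevel K f (r + ε) := by
  intro s hs
  simp only [sublevel, Finset.mem_filter] at hs ⊢
  exact ⟨hs.1, by linarith [(abs_le.mp (hd s hs.1)).2, hs.2]⟩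

end DistLE

section Termination

variable {𝔽} {K : SComplex V} {n : ℕ} {α : Finset V →₀ 𝔽}

theorem TrivialIn.mono {L L' : Finset (Finset V)} (h : L ⊆ L') (hα : TrivialIn 𝔽 L n α) :
    TrivialIn 𝔽 L' n α :=
  Submodule.map_mono (fun _ hc s hs => ⟨h (hc s hs).1, (hc s hs).2⟩) hα

theorem TerminatesAt.le_of_trivialIn {f : Finset V → ℝ} {b r : ℝ}
    (hterm : TerminatesAt 𝔽 K f n α b) (hr : TrivialIn 𝔽 (sublevel K f r) n α) : b ≤ r :=
  not_lt.mp fun hlt => hterm.2 r hlt hr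

theorem TerminatesAt.le_add_of_distLE {f g : Finset V → ℝ} {b c ε : ℝ}
    (hb : TerminatesAt 𝔽 K f n α b) (hc : TerminatesAt 𝔽 K g n α c) (hd : DistLE K f g ε) :
    b ≤ c + ε :=
  hb.le_of_trivialIn (hc.1.mono (hd.sublevel_subset c))

theorem TerminatesAt.abs_sub_le_of_distLE {f g : Finset V → ℝ} {b c ε : ℝ}
    (hb : TerminatesAt 𝔽 K f n α b) (hc : TerminatesAt 𝔽 K g n α c) (hd : DistLE K f g ε) :
    |b - c| ≤ ε :=
  abs_sub_le_iff.mpr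
    ⟨by linarith [hb.le_add_of_distLE hc hd], by linarith [hc.le_add_of_distLE hb hd.symm]⟩

theorem termSet_mono {f : Finset V → ℝ} {ε₁ ε₂ : ℝ} (h : ε₁ ≤ ε₂) :
    TermSet 𝔽 K f n α ε₁ ⊆ TermSet 𝔽 K f n α ε₂ := by
  rintro Δ ⟨g, hg, hd, ht⟩
  exact ⟨g, hg, hd.mono h, ht⟩

theorem termSet_subset_faces (f : Finset V → ℝ) (ε : ℝ) :
    TermSet 𝔽 K f n α ε ⊆ K.faces :=
  fun _ ⟨_, _, _, hΔ, _⟩ => hΔ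

theorem abs_sub_le_of_mem_termSet {f : Finset V → ℝ} {b ε : ℝ}
    (hterm : TerminatesAt 𝔽 K f n α b) {Δ : Finset V} (hΔ : Δ ∈ TermSet 𝔽 K f n α ε) :
    |f Δ - b| ≤ 2 * ε := by
  obtain ⟨g, -, hd, hΔK, hgΔ⟩ := hΔ
  calc |f Δ - b| ≤ |f Δ - g Δ| + |g Δ - b| := abs_sub_le _ _ _
    _ ≤ ε + ε :=
      add_le_add (hd Δ hΔK) (abs_sub_comm b (g Δ) ▸ hterm.abs_sub_le_of_distLE hgΔ hd)
    _ = 2 * ε := by ring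

end Termination

theorem stmt6_general {V : Type*} [LinearOrder V] (𝔽 : Type*) [Field 𝔽]
    (K : SComplex V) (f : Finset V → ℝ)
    (n : ℕ) (α : Finset V →₀ 𝔽) (a b : ℝ)
    (hterm : TerminatesAt 𝔽 K f n α b) :
    (∀ ε₁ ε₂ : ℝ, 0 < ε₁ → ε₁ ≤ ε₂ → ε₂ ≤ (b - a) / 2 →
        (TermSet 𝔽 K f n α ε₁).ncard ≤ (TermSet 𝔽 K f n α ε₂).ncard) ∧
    (∀ ε : ℝ, 0 < ε → ε ≤ (b - a) / 2 →
        ∀ Δ ∈ TermSet 𝔽 K f n α ε, b - 2 * ε ≤ f Δ ∧ f Δ ≤ b + 2 * ε) := by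
  refine ⟨fun ε₁ ε₂ _ h12 _ => ?_, fun ε _ _ Δ hΔ => ?_⟩
  · exact Set.ncard_le_ncard (termSet_mono h12)
      ((K.faces.finite_toSet).subset (termSet_subset_faces f ε₂))
  · have hwindow := abs_le.mp (abs_sub_le_of_mem_termSet hterm hΔ)
    constructor <;> linarith [hwindow.1, hwindow.2]

/-- `ε ↦ |Σ_ε|` is increasing on `(0, (b-a)/2]`, and any
terminal simplex `Δ ∈ Σ_ε` satisfies `f Δ ∈ [b - 2ε, b + 2ε]`. -/
theorem stmt6 {V : Type*} [LinearOrder V] (𝔽 : Type*) [Field 𝔽]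
    (K : SComplex V) (f : Finset V → ℝ) (hf : IsFiltrationFun K f)
    (n : ℕ) (α : Finset V →₀ 𝔽) (a b : ℝ)
    (hborn : BornAt 𝔽 K f n α a) (hterm : TerminatesAt 𝔽 K f n α b) :
    (∀ ε₁ ε₂ : ℝ, 0 < ε₁ → ε₁ ≤ ε₂ → ε₂ ≤ (b - a) / 2 →
        (TermSet 𝔽 K f n α ε₁).ncard ≤ (TermSet 𝔽 K f n α ε₂).ncard) ∧
    (∀ ε : ℝ, 0 < ε → ε ≤ (b - a) / 2 →
        ∀ Δ ∈ TermSet 𝔽 K f n α ε, b - 2 * ε ≤ f Δ ∧ f Δ ≤ b + 2 * ε) :=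
  stmt6_general 𝔽 K f n α a b hterm
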